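/- Let A¹ = (a_{ij}) and A² = (b_{ij}) be symmetric real 2×2 matrices. In the octonions 𝕆, for (t₁, t₂) ∈ ℝ² define E₁ = 𝐞 + (t₁/2)·𝐢·((a₁₂ − b₁₁)𝐣 + (a₁₁ + b₁₂)𝐤) + (t₂/2)·𝐢·((−a₁₁ − b₁₂)𝐣 + (a₁₂ − b₁₁)𝐤), E₂ = 𝐢𝐞 + (t₁/2)·𝐢·((a₂₂ − b₁₂)𝐣 + (a₁₂ + b₂₂)𝐤) + (t₂/2)·𝐢·((−a₁₂ − b₂₂)𝐣 + (a₂₂ − b₁₂)𝐤), F₁ = 𝟏, F₂ = 𝐢 (all products octonionic). Then the imaginary part of the octonion Ē₁·(E₂·(F̄₁·F₂)) vanishes for every (t₁, t₂) ∈ ℝ² if and only if trace A¹ = a₁₁ + a₂₂ = 0 and trace A² = b₁₁ + b₂₂ = 0. (This is the pointwise statement that the total space of the rank 2 eigenbundle V₊ⱼ of the negative spinor bundle S⁻(ℝ⁴) restricted to a surface M² ⊂ ℝ⁴ is a Cayley submanifold of ℝ⁸ if and only if the immersion M² ⊂ ℝ⁴ is minimal.) -/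

import Mathlib

noncomputable section

/-- The octonions as pairs of quaternions, `𝕆 = ℍ × ℍ`. -/
abbrev Octo := Quaternion ℝ × Quaternion ℝ

/-- Cayley–Dickson multiplication `(a,b)·(c,d) = (ac − d̄b, da + bc̄)`. -/
def omul (x y : Octo) : Octo :=
  (x.1 * y.1 - star y.2 * x.2, y.2 * x.1 + x.2 * star y.1)

/-- Octonion conjugation `(a,b)‾ = (ā, −b)`. -/
def oconj (x : Octo) : Octo := (star x.1, -x.2)

/-- Imaginary part `Im x = (x − x̄)/2`. -/
def oim (x : Octo) : Octo := (2⁻¹ : ℝ) • (x - oconj x)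

def o1 : Octo := (1, 0)
def oI : Octo := (⟨0, 1, 0, 0⟩, 0)
def oJ : Octo := (⟨0, 0, 1, 0⟩, 0)
def oK : Octo := (⟨0, 0, 0, 1⟩, 0)
def oE : Octo := (0, 1)
def oIE : Octo := (0, ⟨0, 1, 0, 0⟩)

/-- `E₁ = 𝐞 + (t₁/2)𝐢((a₁₂ − b₁₁)𝐣 + (a₁₁ + b₁₂)𝐤) + (t₂/2)𝐢((−a₁₁ − b₁₂)𝐣 + (a₁₂ − b₁₁)𝐤)`. -/
def cayE1 (A1 A2 : Matrix (Fin 2) (Fin 2) ℝ) (t1 t2 : ℝ) : Octo :=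
  oE + (t1 / 2) • omul oI ((A1 0 1 - A2 0 0) • oJ + (A1 0 0 + A2 0 1) • oK)
     + (t2 / 2) • omul oI ((-(A1 0 0) - A2 0 1) • oJ + (A1 0 1 - A2 0 0) • oK)

/-- `E₂ = 𝐢𝐞 + (t₁/2)𝐢((a₂₂ − b₁₂)𝐣 + (a₁₂ + b₂₂)𝐤) + (t₂/2)𝐢((−a₁₂ − b₂₂)𝐣 + (a₂₂ − b₁₂)𝐤)`. -/
def cayE2 (A1 A2 : Matrix (Fin 2) (Fin 2) ℝ) (t1 t2 : ℝ) : Octo :=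
  oIE + (t1 / 2) • omul oI ((A1 1 1 - A2 0 1) • oJ + (A1 0 1 + A2 1 1) • oK)
      + (t2 / 2) • omul oI ((-(A1 0 1) - A2 1 1) • oJ + (A1 1 1 - A2 0 1) • oK)

/-! The frame vectors are `E₁ = 𝐞 + p₁` and `E₂ = 𝐢𝐞 + p₂` with `p₁, p₂ ∈ span{𝐣, 𝐤}`, so the
four-fold product can be multiplied out by hand. Its imaginary part is linear in the two traces,
because the coefficients of `E₂` are those of `E₁` shifted by them:
`a₂₂ − b₁₂ = tr A¹ − (a₁₁ + b₁₂)` and `a₁₂ + b₂₂ = tr A² + (a₁₂ − b₁₁)`. The `𝐣𝐞`- and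
`𝐤𝐞`-components are `(t₁ tr A¹ − t₂ tr A²)/2` and `(t₂ tr A¹ + t₁ tr A²)/2`, and the `𝐢`-component
is `(t₁² + t₂²)/4 · ((a₁₂ − b₁₁) tr A¹ + (a₁₁ + b₁₂) tr A²)`. Hence it vanishes for all `(t₁, t₂)`
iff both traces vanish. -/

open scoped Quaternion

def oJE : Octo := (0, ⟨0, 0, 1, 0⟩)
def oKE : Octo := (0, ⟨0, 0, 0, 1⟩)

/- The literals `⟨0, 1, 0, 0⟩` in the basis octonions are typed as `QuaternionAlgebra`, so the
`ℍ`-simp lemmas do not fire on them: the computations below first push the projections through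
the operations and only then unfold the basis octonions. -/

lemma omul_oconj_o1_oI : omul (oconj o1) oI = oI := by
  ext <;> simp [omul, oconj] <;> simp [o1, oI]

lemma omul_oI_jk (u v : ℝ) : omul oI (u • oJ + v • oK) = u • oK - v • oJ := by
  ext <;> simp [omul] <;> simp [oI, oJ, oK]

lemma smul_omul_oI_add_smul_omul_oI (t1 t2 u v : ℝ) :
    (t1 / 2) • omul oI (u • oJ + v • oK) + (t2 / 2) • omul oI (-v • oJ + u • oK) =
      (-(t1 * v + t2 * u) / 2) • oJ + ((t1 * u - t2 * v) / 2) • oK := by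
  rw [omul_oI_jk, omul_oI_jk]
  module

lemma cayE1_eq (A1 A2 : Matrix (Fin 2) (Fin 2) ℝ) (t1 t2 : ℝ) :
    cayE1 A1 A2 t1 t2 =
      oE + (-(t1 * (A1 0 0 + A2 0 1) + t2 * (A1 0 1 - A2 0 0)) / 2) • oJ
        + ((t1 * (A1 0 1 - A2 0 0) - t2 * (A1 0 0 + A2 0 1)) / 2) • oK := by
  rw [cayE1, ← neg_add', add_assoc, smul_omul_oI_add_smul_omul_oI, ← add_assoc]

lemma cayE2_eq (A1 A2 : Matrix (Fin 2) (Fin 2) ℝ) (t1 t2 : ℝ) :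
    cayE2 A1 A2 t1 t2 =
      oIE + (-(t1 * (A1 0 1 + A2 1 1) + t2 * (A1 1 1 - A2 0 1)) / 2) • oJ
        + ((t1 * (A1 1 1 - A2 0 1) - t2 * (A1 0 1 + A2 1 1)) / 2) • oK := by
  rw [cayE2, ← neg_add', add_assoc, smul_omul_oI_add_smul_omul_oI, ← add_assoc]

lemma omul_oconj_omul_oI (x1 y1 x2 y2 : ℝ) :
    omul (oconj (oE + x1 • oJ + y1 • oK)) (omul (oIE + x2 • oJ + y2 • oK) oI) =
      (1 + x1 * y2 - x2 * y1) • o1 + (x1 * x2 + y1 * y2) • oI + (y2 - x1) • oJE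
        + (-(x2 + y1)) • oKE := by
  simp only [omul, oconj]
  ext <;> simp only [Prod.fst_add, Prod.snd_add, Prod.smul_fst, Prod.smul_snd,
    Quaternion.re_mul, Quaternion.imI_mul, Quaternion.imJ_mul, Quaternion.imK_mul,
    Quaternion.re_star, Quaternion.imI_star, Quaternion.imJ_star, Quaternion.imK_star,
    Quaternion.re_add, Quaternion.imI_add, Quaternion.imJ_add, Quaternion.imK_add,
    Quaternion.re_sub, Quaternion.imI_sub, Quaternion.imJ_sub, Quaternion.imK_sub,
    Quaternion.re_neg, Quaternion.imI_neg, Quaternion.imJ_neg, Quaternion.imK_neg,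
    Quaternion.re_smul, Quaternion.imI_smul, Quaternion.imJ_smul, Quaternion.imK_smul,
    smul_eq_mul] <;>
    simp [o1, oI, oJ, oK, oE, oIE, oJE, oKE] <;> ring

lemma oim_smul_o1_add (r a b c : ℝ) :
    oim (r • o1 + a • oI + b • oJE + c • oKE) = a • oI + b • oJE + c • oKE := by
  ext <;> simp [oim, oconj] <;> simp [o1, oI, oJE, oKE] <;> ring

lemma smul_oI_add_smul_oJE_add_smul_oKE_eq_zero_iff (a b c : ℝ) :
    a • oI + b • oJE + c • oKE = 0 ↔ a = 0 ∧ b = 0 ∧ c = 0 := by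
  simp only [Prod.ext_iff, Quaternion.ext_iff, Prod.fst_add, Prod.snd_add, Prod.smul_fst,
    Prod.smul_snd, Quaternion.re_add, Quaternion.imI_add, Quaternion.imJ_add, Quaternion.imK_add,
    Quaternion.re_smul, Quaternion.imI_smul, Quaternion.imJ_smul, Quaternion.imK_smul]
  simp [oI, oJE, oKE]

lemma oim_cayley_product_eq (A1 A2 : Matrix (Fin 2) (Fin 2) ℝ) (t1 t2 : ℝ) :
    oim (omul (oconj (cayE1 A1 A2 t1 t2))
      (omul (cayE2 A1 A2 t1 t2) (omul (oconj o1) oI))) =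
      ((t1 ^ 2 + t2 ^ 2) / 4 *
          ((A1 0 1 - A2 0 0) * A1.trace + (A1 0 0 + A2 0 1) * A2.trace)) • oI
        + ((t1 * A1.trace - t2 * A2.trace) / 2) • oJE
        + ((t2 * A1.trace + t1 * A2.trace) / 2) • oKE := by
  rw [cayE1_eq, cayE2_eq, omul_oconj_o1_oI, omul_oconj_omul_oI, oim_smul_o1_add,
    Matrix.trace_fin_two, Matrix.trace_fin_two]
  module

theorem stmt11_general (A1 A2 : Matrix (Fin 2) (Fin 2) ℝ) :
    (∀ t1 t2 : ℝ,
      oim (omul (oconj (cayE1 A1 A2 t1 t2))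
        (omul (cayE2 A1 A2 t1 t2) (omul (oconj o1) oI))) = 0) ↔
    (A1 0 0 + A1 1 1 = 0 ∧ A2 0 0 + A2 1 1 = 0) := by
  simp only [oim_cayley_product_eq, smul_oI_add_smul_oJE_add_smul_oKE_eq_zero_iff,
    ← Matrix.trace_fin_two]
  constructor
  · intro h
    obtain ⟨-, hA1, hA2⟩ := h 1 0
    constructor <;> linarith
  · rintro ⟨hA1, hA2⟩ t1 t2
    simp [hA1, hA2]

/-- the pointwise Cayley criterion for the eigenbundle `V₊ⱼ` of the
negative spinor bundle over a surface `M² ⊂ ℝ⁴`: the imaginary part of the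
four-fold product `Ē₁(E₂(F̄₁F₂))` vanishes for all `(t₁,t₂)` iff `A¹` and `A²`
are traceless, i.e. iff the surface is minimal. -/
theorem stmt11 (A1 A2 : Matrix (Fin 2) (Fin 2) ℝ) (hA1 : A1.IsSymm) (hA2 : A2.IsSymm) :
    (∀ t1 t2 : ℝ,
      oim (omul (oconj (cayE1 A1 A2 t1 t2))
        (omul (cayE2 A1 A2 t1 t2) (omul (oconj o1) oI))) = 0) ↔
    (A1 0 0 + A1 1 1 = 0 ∧ A2 0 0 + A2 1 1 = 0) :=
  stmt11_general A1 A2
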